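/- arXiv:1101.5652 — 7 statements merged into one kernel-verified Lean document; each statement's English description precedes it below -/
import Mathlib

section
/- Let K be an Archimedean linearly ordered field which is Bolzano complete, i.e., every bounded infinite subset of K has a cluster point. Then K is sequentially complete: every Cauchy sequence in K converges to an element of K. -/
/-!
If some value is taken infinitely often, a Cauchy sequence converges to it. Otherwise its range
is infinite, and it is bounded because the sequence is Cauchy, so Bolzano completeness gives a
cluster point `L` of the range. Removing the finitely many values `x 0, …, x (N - 1)` leaves `L`
a cluster point, so some `x m` with `m ≥ N` is close to `L`, and the Cauchy property then
forces the whole tail to be close to `L`.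
-/

open Set

section OrderedAddGroup

variable {G : Type*} [AddCommGroup G] [LinearOrder G]

def IsClusterPoint (A : Set G) (x : G) : Prop :=
  ∀ ε : G, 0 < ε → ∃ a ∈ A, a ≠ x ∧ |a - x| < ε

def IsCauchy (x : ℕ → G) : Prop :=
  ∀ ε : G, 0 < ε → ∃ N : ℕ, ∀ n ≥ N, ∀ m ≥ N, |x n - x m| < ε

def ConvergesTo (x : ℕ → G) (L : G) : Prop :=
  ∀ ε : G, 0 < ε → ∃ N : ℕ, ∀ n ≥ N, |x n - L| < ε

theorem IsCauchy.convergesTo_of_infinite_fiber {x : ℕ → G} (hx : IsCauchy x) {v : G}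
    (hv : {n | x n = v}.Infinite) : ConvergesTo x v := by
  intro ε hε
  obtain ⟨N, hN⟩ := hx ε hε
  refine ⟨N, fun n hn => ?_⟩
  obtain ⟨m, hm : x m = v, hNm⟩ := hv.exists_gt N
  simpa [hm] using hN n hn m hNm.le

variable [IsOrderedAddMonoid G]

theorem IsClusterPoint.diff_singleton {A : Set G} {x : G} (h : IsClusterPoint A x) (b : G) :
    IsClusterPoint (A \ {b}) x := by
  intro ε hε
  by_cases hbx : b = x
  · obtain ⟨a, haA, hax, hdist⟩ := h ε hε
    exact ⟨a, ⟨haA, fun hab => hax (hab.trans hbx)⟩, hax, hdist⟩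
  · -- shrinking `ε` below `|b - x|` keeps `b` out of reach
    have hb : 0 < |b - x| := abs_pos.mpr (sub_ne_zero.mpr hbx)
    obtain ⟨a, haA, hax, hdist⟩ := h (min ε |b - x|) (lt_min hε hb)
    refine ⟨a, ⟨haA, ?_⟩, hax, hdist.trans_le (min_le_left _ _)⟩
    rintro rfl
    exact (hdist.trans_le (min_le_right _ _)).false

theorem IsClusterPoint.diff_of_finite {A F : Set G} {x : G} (h : IsClusterPoint A x)
    (hF : F.Finite) : IsClusterPoint (A \ F) x := by
  induction F, hF using Set.Finite.induction_on with
  | empty => simpa using h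
  | @insert b F _ _ ih =>
    rw [insert_eq, union_comm, ← sdiff_sdiff]
    exact ih.diff_singleton b

end OrderedAddGroup

theorem infinite_range_of_finite_fibers {α β : Type*} [Infinite α] {f : α → β}
    (hf : ∀ b, (f ⁻¹' {b}).Finite) : (range f).Infinite := fun hfin =>
  infinite_univ (by simpa using hfin.preimage' fun b _ => hf b)

section OrderedField

variable {K : Type*} [Field K] [LinearOrder K] [IsStrictOrderedRing K]

theorem IsCauchy.exists_forall_abs_le {x : ℕ → K} (hx : IsCauchy x) : ∃ M, ∀ n, |x n| ≤ M := by
  obtain ⟨N, hN⟩ := hx 1 one_pos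
  have hhead : ∀ n ≤ N, |x n| ≤ ∑ i ∈ Finset.range (N + 1), |x i| := fun n hn =>
    Finset.single_le_sum (fun i _ => abs_nonneg (x i)) (Finset.mem_range.mpr (Nat.lt_succ_of_le hn))
  refine ⟨∑ i ∈ Finset.range (N + 1), |x i| + 1, fun n => ?_⟩
  rcases le_total n N with hn | hn
  · linarith [hhead n hn]
  · have htail : |x n| - |x N| < 1 := (abs_sub_abs_le_abs_sub _ _).trans_lt (hN n hn N le_rfl)
    linarith [hhead N le_rfl]

theorem IsCauchy.convergesTo_of_isClusterPoint_range {x : ℕ → K} (hx : IsCauchy x) {L : K}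
    (hL : IsClusterPoint (range x) L) : ConvergesTo x L := by
  intro ε hε
  obtain ⟨N, hN⟩ := hx (ε / 2) (half_pos hε)
  obtain ⟨_, ⟨⟨m, rfl⟩, hm⟩, -, hmL⟩ :=
    hL.diff_of_finite ((finite_Iio N).image x) (ε / 2) (half_pos hε)
  have hNm : N ≤ m := not_lt.mp fun hmN => hm ⟨m, hmN, rfl⟩
  refine ⟨N, fun n hn => ?_⟩
  calc |x n - L| ≤ |x n - x m| + |x m - L| := abs_sub_le _ _ _
    _ < ε / 2 + ε / 2 := add_lt_add (hN n hn m hNm) hmL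
    _ = ε := add_halves ε

end OrderedField

theorem stmt_10_general {K : Type*} [Field K] [LinearOrder K] [IsStrictOrderedRing K]
    (hB : ∀ A : Set K, (∃ c d : K, A ⊆ Set.Icc c d) → A.Infinite →
      ∃ x : K, ∀ ε : K, 0 < ε → ∃ a ∈ A, a ≠ x ∧ |a - x| < ε) :
    ∀ x : ℕ → K,
      (∀ ε : K, 0 < ε → ∃ N : ℕ, ∀ n ≥ N, ∀ m ≥ N, |x n - x m| < ε) →
      ∃ L : K, ∀ ε : K, 0 < ε → ∃ N : ℕ, ∀ n ≥ N, |x n - L| < ε := by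
  intro x (hx : IsCauchy x)
  by_cases hfiber : ∃ v, {n | x n = v}.Infinite
  · obtain ⟨v, hv⟩ := hfiber
    exact ⟨v, hx.convergesTo_of_infinite_fiber hv⟩
  · push Not at hfiber
    obtain ⟨M, hM⟩ := hx.exists_forall_abs_le
    have hbdd : range x ⊆ Icc (-M) M := by
      rintro _ ⟨n, rfl⟩
      exact abs_le.mp (hM n)
    obtain ⟨L, hL⟩ := hB (range x) ⟨-M, M, hbdd⟩ (infinite_range_of_finite_fibers hfiber)
    exact ⟨L, hx.convergesTo_of_isClusterPoint_range hL⟩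

/-- An Archimedean, Bolzano complete linearly ordered field is sequentially
complete: every Cauchy sequence converges. -/
theorem stmt_10 {K : Type*} [Field K] [LinearOrder K] [IsStrictOrderedRing K]
    (hA : ∀ x : K, ∃ n : ℕ, |x| < (n : K))
    (hB : ∀ A : Set K, (∃ c d : K, A ⊆ Set.Icc c d) → A.Infinite →
      ∃ x : K, ∀ ε : K, 0 < ε → ∃ a ∈ A, a ≠ x ∧ |a - x| < ε) :
    ∀ x : ℕ → K,
      (∀ ε : K, 0 < ε → ∃ N : ℕ, ∀ n ≥ N, ∀ m ≥ N, |x n - x m| < ε) →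
      ∃ L : K, ∀ ε : K, 0 < ε → ∃ N : ℕ, ∀ n ≥ N, |x n - L| < ε :=
  stmt_10_general hB
end

section
/- Let K be an Archimedean linearly ordered field which is Hilbert complete, i.e., for every Archimedean linearly ordered field A, every order-preserving ring homomorphism from K into A is surjective. Then every nonempty family {[a_i, b_i]}_{i ∈ I} of closed bounded intervals in K with the finite intersection property (indexed by an arbitrary set I, of any cardinality) has nonempty intersection; in particular K is Cantor κ-complete for every infinite cardinal κ. -/
/-!
An Archimedean ordered field embeds into `ℝ` by an order-preserving ring homomorphism; Hilbert
completeness makes this embedding onto, so `K` is order isomorphic to `ℝ`. The finite intersection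
property gives `a i ≤ b j` for all `i, j`, and then the supremum of the left endpoints (computed
in `ℝ`) lies in every interval.
-/

universe u w

open Set

instance ULift.isStrictOrderedRing {R : Type*} [Semiring R] [PartialOrder R]
    [IsStrictOrderedRing R] :
    IsStrictOrderedRing (ULift R) :=
  Function.Injective.isStrictOrderedRing ULift.down rfl rfl (fun _ _ => rfl) (fun _ _ => rfl)
    Iff.rfl Iff.rfl

lemma iInter_Icc_nonempty_of_forall_le {α ι : Type*} [ConditionallyCompleteLattice α] [Nonempty ι]
    {a b : ι → α} (h : ∀ i j, a i ≤ b j) : (⋂ i, Icc (a i) (b i)).Nonempty :=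
  ⟨⨆ i, a i, mem_iInter.2 fun i => ⟨le_ciSup ⟨b i, forall_mem_range.2 (h · i)⟩ i, ciSup_le (h · i)⟩⟩

lemma OrderIso.iInter_Icc_nonempty_of_forall_le {α β ι : Type*} [Preorder α]
    [ConditionallyCompleteLattice β] [Nonempty ι] (e : α ≃o β) {a b : ι → α}
    (h : ∀ i j, a i ≤ b j) : (⋂ i, Icc (a i) (b i)).Nonempty := by
  have hβ := _root_.iInter_Icc_nonempty_of_forall_le (a := e ∘ a) (b := e ∘ b)
    fun i j => e.monotone (h i j)
  simpa only [preimage_iInter, Function.comp_apply, e.preimage_Icc, e.symm_apply_apply]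
    using hβ.preimage e.surjective

def HilbertComplete (K : Type u) [Field K] [LinearOrder K] [IsStrictOrderedRing K] : Prop :=
  ∀ (A : Type u) [Field A] [LinearOrder A] [IsStrictOrderedRing A],
    (∀ x : A, ∃ n : ℕ, |x| < (n : A)) →
    ∀ φ : K →+* A, (∀ x y : K, x ≤ y → φ x ≤ φ y) → Function.Surjective φ

section HilbertComplete

open ConditionallyCompleteLinearOrderedField

variable {K : Type u} [Field K] [LinearOrder K] [IsStrictOrderedRing K]

lemma archimedean_of_abs_lt_natCast (h : ∀ x : K, ∃ n : ℕ, |x| < n) : Archimedean K :=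
  archimedean_iff_nat_lt.2 fun x => (h x).imp fun _ hn => (le_abs_self x).trans_lt hn

variable [Archimedean K]

lemma HilbertComplete.surjective_inducedOrderRingHom (hK : HilbertComplete K) :
    Function.Surjective (inducedOrderRingHom K ℝ) := by
  set f := inducedOrderRingHom K ℝ
  -- `ℝ` lives in `Type`, so it is lifted to the universe of `K` before applying `hK`.
  let g : K →+* ULift.{u} ℝ := ULift.ringEquiv.symm.toRingHom.comp f
  have hg := hK (ULift.{u} ℝ) (fun x => exists_nat_gt |x.down|) g fun _ _ hxy => f.monotone' hxy
  exact ULift.down_surjective.comp hg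

noncomputable def HilbertComplete.orderIsoReal (hK : HilbertComplete K) : K ≃o ℝ :=
  StrictMono.orderIsoOfSurjective _
    ((inducedOrderRingHom K ℝ).monotone'.strictMono_of_injective (RingHom.injective _))
    hK.surjective_inducedOrderRingHom

end HilbertComplete

/-- An Archimedean, Hilbert complete linearly ordered field is Cantor
κ-complete for every cardinal: every nonempty family of closed bounded
intervals with the finite intersection property has nonempty intersection. -/
theorem stmt_13 {K : Type u} [Field K] [LinearOrder K] [IsStrictOrderedRing K]
    (hA : ∀ x : K, ∃ n : ℕ, |x| < (n : K))
    (hH : ∀ (A : Type u) [Field A] [LinearOrder A] [IsStrictOrderedRing A],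
      (∀ x : A, ∃ n : ℕ, |x| < (n : A)) →
      ∀ φ : K →+* A, (∀ x y : K, x ≤ y → φ x ≤ φ y) →
        Function.Surjective φ) :
    ∀ (ι : Type w) (a b : ι → K), Nonempty ι →
      (∀ s : Finset ι, (⋂ i ∈ s, Set.Icc (a i) (b i)).Nonempty) →
      (⋂ i : ι, Set.Icc (a i) (b i)).Nonempty := by
  classical
  intro ι a b _ hfip
  have := archimedean_of_abs_lt_natCast hA
  have hle : ∀ i j, a i ≤ b j := fun i j => by
    obtain ⟨x, hx⟩ := hfip {i, j}
    simp only [mem_iInter, Finset.mem_insert, Finset.mem_singleton] at hx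
    exact (hx i (.inl rfl)).1.trans (hx j (.inr rfl)).2
  exact (HilbertComplete.orderIsoReal hH).iInter_Icc_nonempty_of_forall_le hle
end

section
/- Let K be a linearly ordered field. If K is Bolzano–Weierstrass complete (every bounded sequence in K has a convergent subsequence) or monotone complete (every bounded monotone sequence in K converges), then K is Archimedean. Moreover, Bolzano–Weierstrass completeness implies monotone completeness. -/
/-!
A monotone sequence converges to the limit of any convergent subsequence, since it is
squeezed between terms of that subsequence; so Bolzano–Weierstrass completeness gives monotone
completeness. If some `x` bounded all natural numbers, the increasing sequence `n ↦ n` would lie in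
`[0, |x|]` and converge, but its consecutive terms differ by `1`, so it is not even Cauchy.
-/

section Sequences

variable {K : Type*}

def SeqConvergesTo [AddCommGroup K] [LinearOrder K] (x : ℕ → K) (L : K) : Prop :=
  ∀ ε : K, 0 < ε → ∃ N : ℕ, ∀ n ≥ N, |x n - L| < ε

def SeqBounded [Preorder K] (x : ℕ → K) : Prop :=
  ∃ c d : K, ∀ n : ℕ, x n ∈ Set.Icc c d

def IsBolzanoWeierstrassComplete (K : Type*) [AddCommGroup K] [LinearOrder K] : Prop :=
  ∀ x : ℕ → K, SeqBounded x → ∃ φ : ℕ → ℕ, StrictMono φ ∧ ∃ L : K, SeqConvergesTo (x ∘ φ) L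

def IsMonotoneComplete (K : Type*) [AddCommGroup K] [LinearOrder K] : Prop :=
  ∀ x : ℕ → K, (Monotone x ∨ Antitone x) → SeqBounded x → ∃ L : K, SeqConvergesTo x L

variable [AddCommGroup K] [LinearOrder K]

theorem SeqConvergesTo.neg {x : ℕ → K} {L : K} (h : SeqConvergesTo x L) :
    SeqConvergesTo (-x) (-L) := by
  intro ε hε
  obtain ⟨N, hN⟩ := h ε hε
  refine ⟨N, fun n hn => ?_⟩
  rw [Pi.neg_apply, neg_sub_neg, abs_sub_comm]
  exact hN n hn

variable [IsOrderedAddMonoid K]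

theorem Monotone.seqConvergesTo_of_subseq {x : ℕ → K} (hx : Monotone x) {φ : ℕ → ℕ}
    (hφ : StrictMono φ) {L : K} (h : SeqConvergesTo (x ∘ φ) L) : SeqConvergesTo x L := by
  intro ε hε
  obtain ⟨N, hN⟩ := h ε hε
  refine ⟨φ N, fun n hn => abs_sub_lt_iff.2 ⟨?_, ?_⟩⟩
  · have hle : x n ≤ x (φ (max N n)) := hx ((le_max_right N n).trans hφ.le_apply)
    have hclose := (abs_sub_lt_iff.1 (hN (max N n) (le_max_left N n))).1
    simp only [Function.comp_apply] at hclose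
    exact (sub_le_sub_right hle L).trans_lt hclose
  · have hclose := (abs_sub_lt_iff.1 (hN N le_rfl)).2
    simp only [Function.comp_apply] at hclose
    exact (sub_le_sub_left (hx hn) L).trans_lt hclose

theorem Antitone.seqConvergesTo_of_subseq {x : ℕ → K} (hx : Antitone x) {φ : ℕ → ℕ}
    (hφ : StrictMono φ) {L : K} (h : SeqConvergesTo (x ∘ φ) L) : SeqConvergesTo x L := by
  simpa only [neg_neg] using (Monotone.seqConvergesTo_of_subseq (x := -x) hx.neg hφ h.neg).neg

theorem IsBolzanoWeierstrassComplete.isMonotoneComplete (hBW : IsBolzanoWeierstrassComplete K) :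
    IsMonotoneComplete K := by
  rintro x (hmono | hanti) hbdd <;> obtain ⟨φ, hφ, L, hL⟩ := hBW x hbdd
  · exact ⟨L, hmono.seqConvergesTo_of_subseq hφ hL⟩
  · exact ⟨L, hanti.seqConvergesTo_of_subseq hφ hL⟩

end Sequences

section Field

variable {K : Type*} [Field K] [LinearOrder K] [IsStrictOrderedRing K]

theorem not_seqConvergesTo_natCast (L : K) : ¬ SeqConvergesTo (fun n : ℕ => (n : K)) L := by
  intro h
  obtain ⟨N, hN⟩ := h (1 / 2) (by norm_num)
  have hN₀ := abs_sub_lt_iff.1 (hN N le_rfl)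
  have hN₁ := abs_sub_lt_iff.1 (hN (N + 1) N.le_succ)
  push_cast at hN₁
  linarith [hN₀.2, hN₁.1]

theorem IsMonotoneComplete.exists_nat_gt_abs (hMC : IsMonotoneComplete K) (x : K) :
    ∃ n : ℕ, |x| < (n : K) := by
  by_contra! hbound
  obtain ⟨L, hL⟩ := hMC (fun n : ℕ => (n : K)) (Or.inl Nat.mono_cast)
    ⟨0, |x|, fun n => ⟨n.cast_nonneg, hbound n⟩⟩
  exact not_seqConvergesTo_natCast L hL

end Field

/-- If a linearly ordered field is Bolzano–Weierstrass complete or monotone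
complete, then it is Archimedean; moreover Bolzano–Weierstrass completeness
implies monotone completeness. -/
theorem stmt_15 {K : Type*} [Field K] [LinearOrder K] [IsStrictOrderedRing K] :
    (((∀ x : ℕ → K, (∃ c d : K, ∀ n : ℕ, x n ∈ Set.Icc c d) →
        ∃ φ : ℕ → ℕ, StrictMono φ ∧
          ∃ L : K, ∀ ε : K, 0 < ε → ∃ N : ℕ, ∀ n ≥ N, |x (φ n) - L| < ε) ∨
      (∀ x : ℕ → K, (Monotone x ∨ Antitone x) →
        (∃ c d : K, ∀ n : ℕ, x n ∈ Set.Icc c d) →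
        ∃ L : K, ∀ ε : K, 0 < ε → ∃ N : ℕ, ∀ n ≥ N, |x n - L| < ε)) →
      ∀ x : K, ∃ n : ℕ, |x| < (n : K)) ∧
    ((∀ x : ℕ → K, (∃ c d : K, ∀ n : ℕ, x n ∈ Set.Icc c d) →
        ∃ φ : ℕ → ℕ, StrictMono φ ∧
          ∃ L : K, ∀ ε : K, 0 < ε → ∃ N : ℕ, ∀ n ≥ N, |x (φ n) - L| < ε) →
      ∀ x : ℕ → K, (Monotone x ∨ Antitone x) →
        (∃ c d : K, ∀ n : ℕ, x n ∈ Set.Icc c d) →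
        ∃ L : K, ∀ ε : K, 0 < ε → ∃ N : ℕ, ∀ n ≥ N, |x n - L| < ε) := by
  have hMC_of_BW : IsBolzanoWeierstrassComplete K → IsMonotoneComplete K :=
    IsBolzanoWeierstrassComplete.isMonotoneComplete
  refine ⟨?_, hMC_of_BW⟩
  rintro (hBW | hMC)
  · exact (hMC_of_BW hBW).exists_nat_gt_abs
  · exact IsMonotoneComplete.exists_nat_gt_abs hMC
end

section
/- Let K be a linearly ordered field which is Cantor κ-complete for κ = (card K)⁺, the successor cardinal of the cardinality of K. Then every nonempty subset of K bounded from above has a least upper bound in K (K is Dedekind complete); consequently K is Archimedean. -/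
/-!
Given a nonempty set `S` bounded above, consider the family of intervals `[s, u]` with `s ∈ S` and
`u` an upper bound of `S`. It has the finite intersection property (a finite subfamily contains
its largest left endpoint) and at most `#K * #K = #K < (#K)⁺` members, so Cantor completeness
yields a common point, which is exactly a least upper bound of `S`. Dedekind completeness then
gives the Archimedean property: a supremum `s` of `ℕ` would make `s - 1` an upper bound.
-/

open Set Cardinal

universe u

section LinearOrder

variable {K : Type*} [LinearOrder K]

theorem nonempty_biInter_Icc_upperBounds {S : Set K} (hS : S.Nonempty)
    (t : Finset (S × upperBounds S)) : (⋂ i ∈ t, Icc (i.1 : K) i.2).Nonempty := by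
  rcases t.eq_empty_or_nonempty with rfl | ht
  · exact ⟨hS.some, by simp⟩
  obtain ⟨m, -, hmax⟩ := t.exists_max_image (fun i => (i.1 : K)) ht
  refine ⟨m.1, mem_iInter₂.2 fun i hi => ⟨hmax i hi, i.2.2 m.1.2⟩⟩

theorem isLUB_of_mem_iInter_Icc_upperBounds {S : Set K} (hS : S.Nonempty) (hB : BddAbove S)
    {x : K} (hx : x ∈ ⋂ i : S × upperBounds S, Icc (i.1 : K) i.2) : IsLUB S x := by
  obtain ⟨s₀, hs₀⟩ := hS
  obtain ⟨u₀, hu₀⟩ := hB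
  rw [mem_iInter] at hx
  exact ⟨fun s hs => (hx (⟨s, hs⟩, ⟨u₀, hu₀⟩)).1, fun u hu => (hx (⟨s₀, hs₀⟩, ⟨u, hu⟩)).2⟩

end LinearOrder

theorem mk_prod_set_le_of_infinite {K : Type u} [Infinite K] (s t : Set K) : #(s × t) ≤ #K :=
  calc #(s × t) = #s * #t := by rw [mk_prod, lift_id, lift_id]
    _ ≤ #K * #K := mul_le_mul' (mk_set_le s) (mk_set_le t)
    _ = #K := mul_eq_self (aleph0_le_mk K)

theorem exists_isLUB_of_cantor_complete {K : Type u} [LinearOrder K] [Infinite K]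
    (hC : ∀ (ι : Type u) (a b : ι → K), #ι < Order.succ #K →
      (∀ s : Finset ι, (⋂ i ∈ s, Icc (a i) (b i)).Nonempty) → (⋂ i : ι, Icc (a i) (b i)).Nonempty)
    {S : Set K} (hS : S.Nonempty) (hB : BddAbove S) : ∃ x : K, IsLUB S x := by
  obtain ⟨x, hx⟩ := hC (S × upperBounds S) (fun i => i.1) (fun i => i.2)
    ((mk_prod_set_le_of_infinite _ _).trans_lt (Order.lt_succ _))
    (nonempty_biInter_Icc_upperBounds hS)
  exact ⟨x, isLUB_of_mem_iInter_Icc_upperBounds hS hB hx⟩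

theorem archimedean_of_exists_isLUB {K : Type*} [Field K] [LinearOrder K] [IsStrictOrderedRing K]
    (h : ∀ S : Set K, S.Nonempty → BddAbove S → ∃ x, IsLUB S x) : Archimedean K := by
  refine archimedean_iff_nat_lt.2 fun x => ?_
  by_contra! hx
  obtain ⟨s, hs⟩ := h (range ((↑) : ℕ → K)) (range_nonempty _) ⟨x, forall_mem_range.2 hx⟩
  have hpred : s - 1 ∉ upperBounds (range ((↑) : ℕ → K)) := fun hub => by
    linarith [hs.2 hub]
  obtain ⟨n, hn⟩ : ∃ n : ℕ, s - 1 < n := by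
    simpa [upperBounds, forall_mem_range] using hpred
  have hsucc : ((n + 1 : ℕ) : K) ≤ s := hs.1 ⟨n + 1, rfl⟩
  push_cast at hsucc
  linarith

/-- A linearly ordered field which is Cantor κ-complete for κ the successor
cardinal of its own cardinality is Dedekind complete, and hence Archimedean. -/
theorem stmt_16 {K : Type u} [Field K] [LinearOrder K] [IsStrictOrderedRing K]
    (hC : ∀ (ι : Type u) (a b : ι → K),
      Cardinal.mk ι < Order.succ (Cardinal.mk K) →
      (∀ s : Finset ι, (⋂ i ∈ s, Set.Icc (a i) (b i)).Nonempty) →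
      (⋂ i : ι, Set.Icc (a i) (b i)).Nonempty) :
    (∀ S : Set K, S.Nonempty → BddAbove S → ∃ s : K, IsLUB S s) ∧
      ∀ x : K, ∃ n : ℕ, |x| < (n : K) := by
  have hLUB : ∀ S : Set K, S.Nonempty → BddAbove S → ∃ s : K, IsLUB S s :=
    fun _ hS hB => exists_isLUB_of_cantor_complete hC hS hB
  have := archimedean_of_exists_isLUB hLUB
  exact ⟨hLUB, fun x => exists_nat_gt |x|⟩
end

section
/- Let K be a linearly ordered field and κ an uncountable cardinal. Then the following are equivalent: (i) K is algebraically κ-saturated, i.e., every family of fewer than κ open intervals (a_γ, b_γ) in K with the finite intersection property has nonempty intersection; (ii) K is Cantor κ-complete (every family of fewer than κ closed bounded intervals in K with the finite intersection property has nonempty intersection) and K is algebraically κ-saturated at infinity (every subset of K of cardinality less than κ is bounded above). -/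
/-!
If some left endpoint of a family of closed intervals with the finite intersection property equals
a right endpoint, that point lies in every interval; otherwise all left endpoints lie strictly
below all right endpoints, so the open intervals with the same endpoints still have the finite
intersection property, and saturation gives Cantor completeness. Saturation also bounds `S`: a
point `x` of `⋂ s ∈ S, (0, 1 / max s 1)` makes `1 / x` an upper bound. Conversely, as `κ` is
infinite there are fewer than `κ` numbers `1 / (b j - a i)`; an upper bound for them yields a
uniform `δ > 0` with `a i + δ ≤ b j - δ`, and a point of `⋂ i, [a i + δ, b i - δ]` lies in every
`(a i, b i)`.
-/

universe u

open Set

section FiniteIntersection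

variable {α ι : Type*} [LinearOrder α] {a b : ι → α}

theorem lt_of_forall_finset_iInter_Ioo_nonempty
    (h : ∀ s : Finset ι, (⋂ i ∈ s, Ioo (a i) (b i)).Nonempty) (i j : ι) : a i < b j := by
  classical
  obtain ⟨x, hx⟩ := h {i, j}
  simp only [mem_iInter, Finset.mem_insert, Finset.mem_singleton] at hx
  exact (hx i (Or.inl rfl)).1.trans (hx j (Or.inr rfl)).2

theorem le_of_forall_finset_iInter_Icc_nonempty
    (h : ∀ s : Finset ι, (⋂ i ∈ s, Icc (a i) (b i)).Nonempty) (i j : ι) : a i ≤ b j := by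
  classical
  obtain ⟨x, hx⟩ := h {i, j}
  simp only [mem_iInter, Finset.mem_insert, Finset.mem_singleton] at hx
  exact (hx i (Or.inl rfl)).1.trans (hx j (Or.inr rfl)).2

theorem finset_iInter_Ioo_nonempty_of_lt [DenselyOrdered α] [Nonempty α]
    (h : ∀ i j, a i < b j) (s : Finset ι) : (⋂ i ∈ s, Ioo (a i) (b i)).Nonempty := by
  rcases s.eq_empty_or_nonempty with rfl | hs
  · simp
  obtain ⟨i₀, -, hi₀⟩ := s.exists_max_image a hs
  obtain ⟨j₀, -, hj₀⟩ := s.exists_min_image b hs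
  obtain ⟨x, hax, hxb⟩ := exists_between (h i₀ j₀)
  exact ⟨x, mem_iInter₂.2 fun i hi => ⟨(hi₀ i hi).trans_lt hax, hxb.trans_le (hj₀ i hi)⟩⟩

theorem finset_iInter_Icc_nonempty_of_le [Nonempty α]
    (h : ∀ i j, a i ≤ b j) (s : Finset ι) : (⋂ i ∈ s, Icc (a i) (b i)).Nonempty := by
  rcases s.eq_empty_or_nonempty with rfl | hs
  · simp
  obtain ⟨i₀, -, hi₀⟩ := s.exists_max_image a hs
  exact ⟨a i₀, mem_iInter₂.2 fun i hi => ⟨hi₀ i hi, h i₀ i⟩⟩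

end FiniteIntersection

section Saturation

variable (α : Type u) [LinearOrder α] (κ : Cardinal.{u})

def AlgebraicallySaturated : Prop :=
  ∀ (ι : Type u) (a b : ι → α), Cardinal.mk ι < κ →
    (∀ s : Finset ι, (⋂ i ∈ s, Ioo (a i) (b i)).Nonempty) → (⋂ i, Ioo (a i) (b i)).Nonempty

def CantorComplete : Prop :=
  ∀ (ι : Type u) (a b : ι → α), Cardinal.mk ι < κ →
    (∀ s : Finset ι, (⋂ i ∈ s, Icc (a i) (b i)).Nonempty) → (⋂ i, Icc (a i) (b i)).Nonempty

def SaturatedAtInfinity : Prop :=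
  ∀ S : Set α, Cardinal.mk S < κ → BddAbove S

variable {α κ}

theorem AlgebraicallySaturated.cantorComplete [DenselyOrdered α] [Nonempty α]
    (hsat : AlgebraicallySaturated α κ) : CantorComplete α κ := by
  intro ι a b hι hfin
  have hle := le_of_forall_finset_iInter_Icc_nonempty hfin
  by_cases hlt : ∀ i j, a i < b j
  · obtain ⟨x, hx⟩ := hsat ι a b hι (finset_iInter_Ioo_nonempty_of_lt hlt)
    exact ⟨x, mem_iInter.2 fun i => Ioo_subset_Icc_self (mem_iInter.1 hx i)⟩
  · push Not at hlt
    obtain ⟨i, j, hji⟩ := hlt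
    exact ⟨a i, mem_iInter.2 fun k => ⟨(hle k j).trans hji, hle i k⟩⟩

theorem AlgebraicallySaturated.saturatedAtInfinity {K : Type u} [Field K] [LinearOrder K]
    [IsStrictOrderedRing K] (hsat : AlgebraicallySaturated K κ) : SaturatedAtInfinity K κ := by
  intro S hS
  have hpos : ∀ s : S, (0 : K) < (max (s : K) 1)⁻¹ :=
    fun s => inv_pos.2 (one_pos.trans_le (le_max_right _ _))
  obtain ⟨x, hx⟩ := hsat S (fun _ => 0) (fun s => (max (s : K) 1)⁻¹) hS
    (finset_iInter_Ioo_nonempty_of_lt fun _ j => hpos j)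
  refine ⟨x⁻¹, fun s hs => ?_⟩
  obtain ⟨hx₀, hxs⟩ := mem_iInter.1 hx ⟨s, hs⟩
  have : max s 1 < x⁻¹ := (lt_inv_comm₀ hx₀ (one_pos.trans_le (le_max_right _ _))).1 hxs
  exact (le_max_left _ _).trans this.le

theorem exists_pos_add_le_sub_of_bddAbove_inv_sub {K ι : Type*} [Field K] [LinearOrder K]
    [IsStrictOrderedRing K] {a b : ι → K} (hlt : ∀ i j, a i < b j)
    (hbdd : BddAbove (range fun p : ι × ι => (b p.2 - a p.1)⁻¹)) :
    ∃ δ > 0, ∀ i j, a i + δ ≤ b j - δ := by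
  obtain ⟨M, hM₁, hM⟩ := hbdd.exists_ge 1
  have hM₀ : 0 < M := one_pos.trans_le hM₁
  refine ⟨M⁻¹ / 2, by positivity, fun i j => ?_⟩
  have hgap : M⁻¹ ≤ b j - a i :=
    inv_le_of_inv_le₀ (sub_pos.2 (hlt i j)) (hM _ (mem_range_self (i, j)))
  linarith

theorem CantorComplete.algebraicallySaturated {K : Type u} [Field K] [LinearOrder K]
    [IsStrictOrderedRing K] (hκ : Cardinal.aleph0 ≤ κ) (hC : CantorComplete K κ)
    (hB : SaturatedAtInfinity K κ) : AlgebraicallySaturated K κ := by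
  intro ι a b hι hfin
  have hlt := lt_of_forall_finset_iInter_Ioo_nonempty hfin
  have hgaps : Cardinal.mk (range fun p : ι × ι => (b p.2 - a p.1)⁻¹) < κ := by
    refine Cardinal.mk_range_le.trans_lt ?_
    rw [Cardinal.mk_prod, Cardinal.lift_id]
    exact Cardinal.mul_lt_of_lt hκ hι hι
  obtain ⟨δ, hδ, hδab⟩ := exists_pos_add_le_sub_of_bddAbove_inv_sub hlt (hB _ hgaps)
  obtain ⟨x, hx⟩ := hC ι (fun i => a i + δ) (fun i => b i - δ) hι
    (finset_iInter_Icc_nonempty_of_le hδab)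
  refine ⟨x, mem_iInter.2 fun i => ?_⟩
  obtain ⟨hax, hxb⟩ := mem_iInter.1 hx i
  exact ⟨(lt_add_of_pos_right _ hδ).trans_le hax, hxb.trans_lt (sub_lt_self _ hδ)⟩

end Saturation

/-- For an uncountable cardinal κ, a linearly ordered field is algebraically
κ-saturated iff it is Cantor κ-complete and algebraically κ-saturated at
infinity. -/
theorem stmt_17 {K : Type u} [Field K] [LinearOrder K] [IsStrictOrderedRing K]
    (κ : Cardinal.{u}) (hκ : Cardinal.aleph0 < κ) :
    (∀ (ι : Type u) (a b : ι → K), Cardinal.mk ι < κ →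
      (∀ s : Finset ι, (⋂ i ∈ s, Set.Ioo (a i) (b i)).Nonempty) →
      (⋂ i : ι, Set.Ioo (a i) (b i)).Nonempty) ↔
    ((∀ (ι : Type u) (a b : ι → K), Cardinal.mk ι < κ →
        (∀ s : Finset ι, (⋂ i ∈ s, Set.Icc (a i) (b i)).Nonempty) →
        (⋂ i : ι, Set.Icc (a i) (b i)).Nonempty) ∧
      ∀ S : Set K, Cardinal.mk S < κ → BddAbove S) :=
  show AlgebraicallySaturated K κ ↔ CantorComplete K κ ∧ SaturatedAtInfinity K κ from
    ⟨fun hsat => ⟨hsat.cantorComplete, hsat.saturatedAtInfinity⟩,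
      fun ⟨hC, hB⟩ => hC.algebraicallySaturated hκ.le hB⟩
end

section
/- Let K be a linearly ordered field which is algebraically saturated, i.e., every countable family of open intervals in K with the finite intersection property has nonempty intersection. Then every sequence in K that converges (in the order sense) is eventually constant, and consequently K is sequentially complete: every Cauchy sequence in K converges. -/
/-!
Saturation applied to the intervals `(0, |y n|)` gives a single `δ > 0` below every nonzero
`|y n|`. So the nonzero values of `|x n - L|` (for a convergent sequence) and of `|x n - x m|`
(for a Cauchy sequence, enumerating pairs via `Nat.unpair`) are bounded away from `0`; once they
drop below `δ` they must vanish. Hence convergent sequences are eventually constant, and a Cauchy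
sequence is eventually constant and so converges to that constant.
-/

/-- The paper's *algebraic saturation* of an ordered field, for an arbitrary preorder. -/
def IntervalSaturated (α : Type*) [Preorder α] : Prop :=
  ∀ a b : ℕ → α,
    (∀ s : Finset ℕ, (⋂ i ∈ s, Set.Ioo (a i) (b i)).Nonempty) →
    (⋂ i : ℕ, Set.Ioo (a i) (b i)).Nonempty

namespace IntervalSaturated

theorem exists_between_forall {α : Type*} [LinearOrder α] [DenselyOrdered α]
    (hsat : IntervalSaturated α) {a : α} {c : ℕ → α} (hc : ∀ n, a < c n) :
    ∃ δ, a < δ ∧ ∀ n, δ < c n := by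
  have hfin : ∀ s : Finset ℕ, (⋂ i ∈ s, Set.Ioo a (c i)).Nonempty := by
    intro s
    have hmin : a < (insert 0 s).inf' (Finset.insert_nonempty 0 s) c :=
      (Finset.lt_inf'_iff _).2 fun i _ => hc i
    obtain ⟨δ, haδ, hδ⟩ := exists_between hmin
    refine ⟨δ, Set.mem_iInter₂.2 fun i hi => ⟨haδ, ?_⟩⟩
    exact hδ.trans_le (Finset.inf'_le c (Finset.mem_insert_of_mem hi))
  obtain ⟨δ, hδ⟩ := hsat (fun _ => a) c hfin
  simp only [Set.mem_iInter, Set.mem_Ioo] at hδ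
  exact ⟨δ, (hδ 0).1, fun n => (hδ n).2⟩

variable {K : Type*} [AddCommGroup K] [LinearOrder K] [IsOrderedAddMonoid K]
  [DenselyOrdered K] [Nontrivial K]

theorem exists_pos_forall_lt_abs (hsat : IntervalSaturated K) (y : ℕ → K) :
    ∃ δ, 0 < δ ∧ ∀ n, y n ≠ 0 → δ < |y n| := by
  obtain ⟨e, he⟩ := exists_zero_lt (α := K)
  obtain ⟨δ, hδ, hlt⟩ := hsat.exists_between_forall
    (c := fun n => if y n = 0 then e else |y n|) fun n => by
      split_ifs with h
      · exact he
      · exact abs_pos.2 h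
  refine ⟨δ, hδ, fun n hn => ?_⟩
  simpa [hn] using hlt n

theorem eventually_eq_of_converges (hsat : IntervalSaturated K) {x : ℕ → K} {L : K}
    (hx : ∀ ε : K, 0 < ε → ∃ N : ℕ, ∀ n ≥ N, |x n - L| < ε) :
    ∃ N : ℕ, ∀ n ≥ N, x n = L := by
  obtain ⟨δ, hδ, hgap⟩ := hsat.exists_pos_forall_lt_abs fun n => x n - L
  obtain ⟨N, hN⟩ := hx δ hδ
  refine ⟨N, fun n hn => ?_⟩
  by_contra hne
  exact (hN n hn).not_gt (hgap n (sub_ne_zero.2 hne))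

theorem eventually_const_of_cauchy (hsat : IntervalSaturated K) {x : ℕ → K}
    (hx : ∀ ε : K, 0 < ε → ∃ N : ℕ, ∀ n ≥ N, ∀ m ≥ N, |x n - x m| < ε) :
    ∃ N : ℕ, ∀ n ≥ N, x n = x N := by
  obtain ⟨δ, hδ, hgap⟩ :=
    hsat.exists_pos_forall_lt_abs fun k => x k.unpair.1 - x k.unpair.2
  obtain ⟨N, hN⟩ := hx δ hδ
  refine ⟨N, fun n hn => ?_⟩
  by_contra hne
  have hgap_nN := hgap (Nat.pair n N)
  simp only [Nat.unpair_pair] at hgap_nN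
  exact (hN n hn N le_rfl).not_gt (hgap_nN (sub_ne_zero.2 hne))

end IntervalSaturated

/-- In an algebraically saturated linearly ordered field, every convergent
sequence is eventually constant; consequently the field is sequentially
complete. -/
theorem stmt_18 {K : Type*} [Field K] [LinearOrder K] [IsStrictOrderedRing K]
    (hsat : ∀ a b : ℕ → K,
      (∀ s : Finset ℕ, (⋂ i ∈ s, Set.Ioo (a i) (b i)).Nonempty) →
      (⋂ i : ℕ, Set.Ioo (a i) (b i)).Nonempty) :
    (∀ (x : ℕ → K) (L : K),
      (∀ ε : K, 0 < ε → ∃ N : ℕ, ∀ n ≥ N, |x n - L| < ε) →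
      ∃ N : ℕ, ∀ n ≥ N, x n = x N) ∧
    ∀ x : ℕ → K,
      (∀ ε : K, 0 < ε → ∃ N : ℕ, ∀ n ≥ N, ∀ m ≥ N, |x n - x m| < ε) →
      ∃ L : K, ∀ ε : K, 0 < ε → ∃ N : ℕ, ∀ n ≥ N, |x n - L| < ε := by
  have hsat : IntervalSaturated K := hsat
  refine ⟨fun x L hx => ?_, fun x hx => ?_⟩
  · obtain ⟨N, hN⟩ := hsat.eventually_eq_of_converges hx
    exact ⟨N, fun n hn => (hN n hn).trans (hN N le_rfl).symm⟩
  · obtain ⟨N, hN⟩ := hsat.eventually_const_of_cauchy hx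
    exact ⟨x N, fun ε hε => ⟨N, fun n hn => by simpa [hN n hn] using hε⟩⟩
end

section
/- Let K be a linearly ordered field which is Cantor complete (every sequence of closed bounded intervals with the finite intersection property has nonempty intersection) but not algebraically saturated (there exists a countable family of open intervals with the finite intersection property and empty intersection). Then: (i) K has a strictly increasing sequence that is unbounded above; and (ii) K is sequentially complete: every Cauchy sequence in K converges. -/
/-!
Failure of algebraic saturation gives open intervals `(a i, b i)` with the finite intersection
property and empty intersection; Cantor completeness gives a point `c` in every `[a i, b i]`,
which must then be an endpoint `a m` or `b m` of one of them. If `c = a m`, every `b i` lies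
above `c` and no point lies strictly between `c` and all the `b i`, so the gaps `b i - c` are
positive and eventually below every `ε > 0` (symmetrically if `c = b m`). Thus `K` has a
countable coinitial set of positive elements: their inverses are cofinal, giving (i), and
nested closed intervals of these radii around a Cauchy sequence, given by Cantor completeness,
meet in its limit, giving (ii).
-/

open Set OrderDual

def IsCantorComplete (K : Type*) [Preorder K] : Prop :=
  ∀ a b : ℕ → K, (∀ s : Finset ℕ, (⋂ i ∈ s, Icc (a i) (b i)).Nonempty) →
    (⋂ i : ℕ, Icc (a i) (b i)).Nonempty

def IsAlgebraicallySaturated (K : Type*) [Preorder K] : Prop :=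
  ∀ a b : ℕ → K, (∀ s : Finset ℕ, (⋂ i ∈ s, Ioo (a i) (b i)).Nonempty) →
    (⋂ i : ℕ, Ioo (a i) (b i)).Nonempty

section IntervalFamily

variable {α : Type*} [LinearOrder α] {a b : ℕ → α}

theorem left_lt_right_of_finite_inter_Ioo_nonempty
    (hfip : ∀ s : Finset ℕ, (⋂ i ∈ s, Ioo (a i) (b i)).Nonempty) (i j : ℕ) : a i < b j := by
  obtain ⟨y, hy⟩ := hfip {i, j}
  simp only [Finset.mem_insert, Finset.mem_singleton, mem_iInter, mem_Ioo] at hy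
  exact (hy i (Or.inl rfl)).1.trans (hy j (Or.inr rfl)).2

variable [DenselyOrdered α] {c d : α}

theorem exists_right_lt_of_forall_left_le (hempty : ⋂ i, Ioo (a i) (b i) = ∅)
    (hc : ∀ i, a i ≤ c) (hd : c < d) : ∃ i, b i < d := by
  obtain ⟨y, hcy, hyd⟩ := exists_between hd
  have hy : y ∉ ⋂ i, Ioo (a i) (b i) := hempty ▸ notMem_empty y
  simp only [mem_iInter, mem_Ioo, not_forall, not_and, not_lt] at hy
  obtain ⟨i, hi⟩ := hy
  exact ⟨i, (hi ((hc i).trans_lt hcy)).trans_lt hyd⟩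

theorem exists_lt_left_of_forall_le_right (hempty : ⋂ i, Ioo (a i) (b i) = ∅)
    (hc : ∀ i, c ≤ b i) (hd : d < c) : ∃ i, d < a i :=
  exists_right_lt_of_forall_left_le (α := αᵒᵈ) (a := toDual ∘ b) (b := toDual ∘ a)
    (by simp [Ioo_toDual, ← preimage_iInter, hempty]) hc hd

end IntervalFamily

theorem exists_pos_seq_forall_exists_lt_of_not_isAlgebraicallySaturated {K : Type*}
    [AddCommGroup K] [LinearOrder K] [IsOrderedAddMonoid K] [DenselyOrdered K]
    (hC : IsCantorComplete K) (hns : ¬IsAlgebraicallySaturated K) :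
    ∃ t : ℕ → K, (∀ n, 0 < t n) ∧ ∀ ε, 0 < ε → ∃ n, t n < ε := by
  simp only [IsAlgebraicallySaturated, not_forall, not_nonempty_iff_eq_empty] at hns
  obtain ⟨a, b, hfip, hempty⟩ := hns
  have hab := left_lt_right_of_finite_inter_Ioo_nonempty hfip
  obtain ⟨c, hc⟩ :=
    hC a b fun s => (hfip s).mono (iInter₂_mono fun i _ => Ioo_subset_Icc_self)
  simp only [mem_iInter, mem_Icc] at hc
  obtain ⟨m, hm⟩ : ∃ m, c ∉ Ioo (a m) (b m) := by
    simpa [hempty] using (mem_iInter (s := fun i => Ioo (a i) (b i)) (x := c)).not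
  rcases (hc m).1.eq_or_lt with hac | hac
  · refine ⟨fun i => b i - c, fun i => sub_pos.mpr (hac ▸ hab m i), fun ε hε => ?_⟩
    obtain ⟨i, hi⟩ :=
      exists_right_lt_of_forall_left_le hempty (fun i => (hc i).1) (lt_add_of_pos_right c hε)
    exact ⟨i, sub_lt_iff_lt_add'.mpr hi⟩
  · have hbc : b m = c := le_antisymm (not_lt.mp fun hcb => hm ⟨hac, hcb⟩) (hc m).2
    refine ⟨fun i => c - a i, fun i => sub_pos.mpr (hbc ▸ hab i m), fun ε hε => ?_⟩
    obtain ⟨i, hi⟩ :=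
      exists_lt_left_of_forall_le_right hempty (fun i => (hc i).2) (sub_lt_self c hε)
    exact ⟨i, sub_lt_comm.mp hi⟩

section OrderedField

variable {K : Type*}

theorem exists_strictMono_forall_exists_lt [Semiring K] [LinearOrder K] [IsStrictOrderedRing K]
    {u : ℕ → K} (hu : ∀ c, ∃ n, c < u n) : ∃ x : ℕ → K, StrictMono x ∧ ∀ c, ∃ n, c < x n :=
  ⟨fun n => partialSups u n + n, (partialSups u).monotone.add_strictMono Nat.strictMono_cast,
    fun c => (hu c).imp fun n hn =>
      hn.trans_le ((le_partialSups u n).trans (le_add_of_nonneg_right n.cast_nonneg))⟩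

variable [Field K] [LinearOrder K] [IsStrictOrderedRing K] {t : ℕ → K}

theorem forall_exists_lt_inv (ht0 : ∀ n, 0 < t n) (ht : ∀ ε, 0 < ε → ∃ n, t n < ε) (c : K) :
    ∃ n, c < (t n)⁻¹ := by
  have hc1 : 0 < max c 1 := lt_max_of_lt_right one_pos
  obtain ⟨n, hn⟩ := ht (max c 1)⁻¹ (inv_pos.mpr hc1)
  exact ⟨n, (le_max_left c 1).trans_lt ((lt_inv_comm₀ (ht0 n) hc1).mp hn)⟩

theorem exists_limit_of_cauchy (hC : IsCantorComplete K) (ht0 : ∀ n, 0 < t n)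
    (ht : ∀ ε, 0 < ε → ∃ n, t n < ε) {x : ℕ → K}
    (hx : ∀ ε : K, 0 < ε → ∃ N : ℕ, ∀ n ≥ N, ∀ m ≥ N, |x n - x m| < ε) :
    ∃ L : K, ∀ ε : K, 0 < ε → ∃ N : ℕ, ∀ n ≥ N, |x n - L| < ε := by
  choose N hN using fun m => hx (t m) (ht0 m)
  obtain ⟨L, hL⟩ := hC (fun i => x (N i) - t i) (fun i => x (N i) + t i) fun s => by
    refine ⟨x (s.sup N), ?_⟩
    simp only [mem_iInter, ← mem_Icc_iff_abs_le]
    exact fun i hi => (hN i _ le_rfl _ (Finset.le_sup hi)).le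
  simp only [mem_iInter, ← mem_Icc_iff_abs_le] at hL
  refine ⟨L, fun ε hε => ?_⟩
  obtain ⟨m, hm⟩ := ht (ε / 2) (half_pos hε)
  refine ⟨N m, fun n hn => ?_⟩
  calc |x n - L| ≤ |x n - x (N m)| + |x (N m) - L| := abs_sub_le _ _ _
    _ < t m + t m := add_lt_add_of_lt_of_le (hN m n hn _ le_rfl) (hL m)
    _ < ε := by linarith

end OrderedField

/-- A Cantor complete but not algebraically saturated linearly ordered field
has a strictly increasing sequence unbounded above, and is sequentially
complete. -/
theorem stmt_19 {K : Type*} [Field K] [LinearOrder K] [IsStrictOrderedRing K]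
    (hC : ∀ a b : ℕ → K,
      (∀ s : Finset ℕ, (⋂ i ∈ s, Set.Icc (a i) (b i)).Nonempty) →
      (⋂ i : ℕ, Set.Icc (a i) (b i)).Nonempty)
    (hns : ¬∀ a b : ℕ → K,
      (∀ s : Finset ℕ, (⋂ i ∈ s, Set.Ioo (a i) (b i)).Nonempty) →
      (⋂ i : ℕ, Set.Ioo (a i) (b i)).Nonempty) :
    (∃ x : ℕ → K, StrictMono x ∧ ∀ c : K, ∃ n : ℕ, c < x n) ∧
    ∀ x : ℕ → K,
      (∀ ε : K, 0 < ε → ∃ N : ℕ, ∀ n ≥ N, ∀ m ≥ N, |x n - x m| < ε) →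
      ∃ L : K, ∀ ε : K, 0 < ε → ∃ N : ℕ, ∀ n ≥ N, |x n - L| < ε := by
  obtain ⟨t, ht0, ht⟩ := exists_pos_seq_forall_exists_lt_of_not_isAlgebraicallySaturated hC hns
  exact ⟨exists_strictMono_forall_exists_lt (forall_exists_lt_inv ht0 ht),
    fun x hx => exists_limit_of_cauchy hC ht0 ht hx⟩
end
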